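/- Let $\Phi$ be a traceless symmetric $m\times m$ real matrix, $m > 2$, and suppose $|\Phi|^2 = m h^2(1-h^2)$ for some $h \in (0,1)$, where $|\Phi|^2 = \operatorname{tr}(\Phi^2)$. If $0 \ge \left(m + m h^2 - \frac{|\Phi|^2}{h^2}\right)|\Phi|^2 + m \operatorname{tr}(\Phi^3)$, then $h \le \frac{m-2}{m}$. -/

import Mathlib

/-!
Diagonalise `Φ`: its eigenvalues `xᵢ` sum to `0`, and `P = ∑ xᵢ² = tr Φ²`, `T = ∑ xᵢ³ = tr Φ³`.
Okumura's inequality gives `m (m - 1) T² ≤ (m - 2)² P³`, while, since `P / h² = m (1 - h²)`,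
the hypothesis reduces to `T ≤ -2 h² P < 0`. Squaring and substituting `P = m h² (1 - h²)`
leaves `4 (m - 1) h² ≤ (m - 2)² (1 - h²)`, that is `(m h)² ≤ (m - 2)²`.
-/

open Finset Matrix Unitary

theorem Matrix.IsHermitian.trace_pow_eq_sum_eigenvalues_pow {𝕜 n : Type*} [RCLike 𝕜]
    [Fintype n] [DecidableEq n] {A : Matrix n n 𝕜} (hA : A.IsHermitian) (k : ℕ) :
    (A ^ k).trace = ∑ i, (hA.eigenvalues i : 𝕜) ^ k := by
  conv_lhs => rw [hA.spectral_theorem, ← map_pow, conjStarAlgAut_apply, trace_mul_cycle,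
    Unitary.coe_star_mul_self, one_mul, diagonal_pow, trace_diagonal]
  simp

section Okumura

variable {ι : Type*} [Fintype ι] {x : ι → ℝ}

theorem card_mul_sq_le_of_sum_eq_zero (hx : ∑ j, x j = 0) (i : ι) :
    Fintype.card ι * x i ^ 2 ≤ (Fintype.card ι - 1) * ∑ j, x j ^ 2 := by
  classical
  have hrest : ∑ j ∈ univ.erase i, x j = -x i := by
    rw [← add_sum_erase univ x (mem_univ i)] at hx
    linarith
  have hcs := sq_sum_le_card_mul_sum_sq (s := univ.erase i) (f := x)
  rw [hrest, neg_sq, card_erase_of_mem (mem_univ i), sum_erase_eq_sub (mem_univ i),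
    card_univ, Nat.cast_pred (Fintype.card_pos_iff.mpr ⟨i⟩)] at hcs
  linarith

/-- Okumura's inequality, with `s = √(∑ xᵢ² / (n (n - 1)))` given through its square. -/
theorem neg_mul_sum_sq_le_sum_pow_three (hx : ∑ i, x i = 0) {s : ℝ} (hs : 0 ≤ s)
    (hs2 : Fintype.card ι * (Fintype.card ι - 1) * s ^ 2 = ∑ i, x i ^ 2) :
    -(Fintype.card ι - 2) * s * ∑ i, x i ^ 2 ≤ ∑ i, x i ^ 3 := by
  set n : ℝ := (Fintype.card ι : ℝ)
  have hcoord (i : ι) : 0 ≤ x i + (n - 1) * s := by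
    have hn : (1 : ℝ) ≤ n := Nat.one_le_cast.mpr (Fintype.card_pos_iff.mpr ⟨i⟩)
    have hsq : x i ^ 2 ≤ ((n - 1) * s) ^ 2 := by
      nlinarith [card_mul_sq_le_of_sum_eq_zero hx i]
    linarith [(abs_le_of_sq_le_sq' hsq (by positivity)).1]
  -- Each term `(xᵢ + (n - 1) s) (xᵢ - s)²` is nonnegative, and they sum to
  -- `∑ xᵢ³ + (n - 2) s ∑ xᵢ²`.
  have hexpand : ∑ i, (x i + (n - 1) * s) * (x i - s) ^ 2
      = ∑ i, x i ^ 3 + (n - 3) * s * ∑ i, x i ^ 2 + (s ^ 2 - 2 * (n - 1) * s ^ 2) * ∑ i, x i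
        + ∑ _i : ι, (n - 1) * s ^ 3 := by
    simp only [mul_sum, ← sum_add_distrib]
    exact sum_congr rfl fun i _ => by ring
  have hnonneg : 0 ≤ ∑ i, (x i + (n - 1) * s) * (x i - s) ^ 2 :=
    sum_nonneg fun i _ => mul_nonneg (hcoord i) (sq_nonneg _)
  have hconst : ∑ _i : ι, (n - 1) * s ^ 3 = s * ∑ i, x i ^ 2 := by
    rw [sum_const, card_univ, nsmul_eq_mul, ← hs2]
    ring
  rw [hexpand, hx, hconst] at hnonneg
  linarith

theorem card_mul_sq_sum_pow_three_le (hn : 2 ≤ Fintype.card ι) (hx : ∑ i, x i = 0) :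
    Fintype.card ι * (Fintype.card ι - 1) * (∑ i, x i ^ 3) ^ 2
      ≤ (Fintype.card ι - 2) ^ 2 * (∑ i, x i ^ 2) ^ 3 := by
  have hn2 : (2 : ℝ) ≤ Fintype.card ι := by exact_mod_cast hn
  set n : ℝ := (Fintype.card ι : ℝ)
  set P := ∑ i, x i ^ 2
  set s := √(P / (n * (n - 1)))
  have hs2 : n * (n - 1) * s ^ 2 = P := by
    have hn1 : 0 < n - 1 := by linarith
    rw [Real.sq_sqrt (by positivity)]
    field_simp
  have hlower : -(n - 2) * s * P ≤ ∑ i, x i ^ 3 :=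
    neg_mul_sum_sq_le_sum_pow_three hx (Real.sqrt_nonneg _) hs2
  have hupper : -(n - 2) * s * P ≤ -∑ i, x i ^ 3 := by
    simpa [Odd.neg_pow (by decide : Odd 3)] using
      neg_mul_sum_sq_le_sum_pow_three (x := -x) (by simp [hx]) (Real.sqrt_nonneg _)
        (by simpa using hs2)
  have hsq : (∑ i, x i ^ 3) ^ 2 ≤ ((n - 2) * s * P) ^ 2 :=
    sq_le_sq' (by linarith) (by linarith)
  calc n * (n - 1) * (∑ i, x i ^ 3) ^ 2 ≤ n * (n - 1) * ((n - 2) * s * P) ^ 2 := by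
        gcongr; nlinarith
    _ = (n - 2) ^ 2 * P ^ 3 := by rw [← hs2]; ring

end Okumura

/-- Combining the Okumura Lemma with `|Φ|² = m h²(1-h²)` yields `h ≤ (m-2)/m`. -/
theorem h_le_of_okumura (m : ℕ) (hm : 2 < m)
    (Φ : Matrix (Fin m) (Fin m) ℝ) (hΦs : Φ.IsSymm) (hΦtr : Φ.trace = 0)
    (h : ℝ) (h0 : 0 < h) (h1 : h < 1)
    (hnorm : (Φ * Φ).trace = (m : ℝ) * h ^ 2 * (1 - h ^ 2))
    (hineq : 0 ≥ ((m : ℝ) + (m : ℝ) * h ^ 2 - (Φ * Φ).trace / h ^ 2) * (Φ * Φ).trace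
        + (m : ℝ) * (Φ * Φ * Φ).trace) :
    h ≤ ((m : ℝ) - 2) / m := by
  have hΦ : Φ.IsHermitian := isHermitian_iff_isSymm.mpr hΦs
  have htrace (k : ℕ) : (Φ ^ k).trace = ∑ i, hΦ.eigenvalues i ^ k := by
    simpa using hΦ.trace_pow_eq_sum_eigenvalues_pow k
  have hokumura := card_mul_sq_sum_pow_three_le (x := hΦ.eigenvalues)
    (by simpa using hm.le) (by simpa [hΦ.trace_eq_sum_eigenvalues] using hΦtr)
  rw [← htrace, ← htrace, sq Φ, pow_three' Φ, Fintype.card_fin] at hokumura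
  set P := (Φ * Φ).trace
  set T := (Φ * Φ * Φ).trace
  have hm2 : (2 : ℝ) < m := by exact_mod_cast hm
  have hP : 0 < P := hnorm ▸ mul_pos (by positivity) (by nlinarith)
  have hT : 2 * h ^ 2 * P ≤ -T := by
    rw [show P / h ^ 2 = m * (1 - h ^ 2) by rw [hnorm]; field_simp] at hineq
    nlinarith
  have hT2 : (2 * h ^ 2 * P) ^ 2 ≤ T ^ 2 := by
    simpa using pow_le_pow_left₀ (by positivity) hT 2
  have hscaled : 4 * (m - 1) * h ^ 2 * (m * h ^ 2 * P ^ 2)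
      ≤ (m - 2) ^ 2 * (1 - h ^ 2) * (m * h ^ 2 * P ^ 2) :=
    calc 4 * (m - 1) * h ^ 2 * (m * h ^ 2 * P ^ 2)
        _ = m * (m - 1) * (2 * h ^ 2 * P) ^ 2 := by ring
        _ ≤ m * (m - 1) * T ^ 2 := mul_le_mul_of_nonneg_left hT2 (by nlinarith)
        _ ≤ (m - 2) ^ 2 * P ^ 3 := hokumura
        _ = (m - 2) ^ 2 * (1 - h ^ 2) * (m * h ^ 2 * P ^ 2) := by rw [hnorm]; ring
  have hsq : ((m : ℝ) * h) ^ 2 ≤ (m - 2) ^ 2 := by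
    linear_combination le_of_mul_le_mul_right hscaled (by positivity)
  rw [le_div_iff₀ (by linarith)]
  linarith [(abs_le_of_sq_le_sq' hsq (by linarith)).2]
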